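/- In a rooted directed graph where every vertex is reachable from the root, every vertex other than the root that has a strict dominator has a unique immediate dominator: a strict dominator d of v such that every other strict dominator of v strictly dominates d. -/

import Mathlib

variable {V : Type*}

/-- `p` is a path (finite walk) from `r` to `b` in the directed graph `adj`. -/
def IsPath (adj : V → V → Prop) (r b : V) (p : List V) : Prop :=
  p.head? = some r ∧ p.getLast? = some b ∧ p.Chain' adj

/-- `a` dominates `b` (w.r.t. root `r`): every path from `r` to `b` contains `a`. -/
def Dom (adj : V → V → Prop) (r a b : V) : Prop :=
  ∀ p : List V, IsPath adj r b p → a ∈ p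

/-- `a` strictly dominates `b`: `a` dominates `b` and `a ≠ b`. -/
def StrictDom (adj : V → V → Prop) (r a b : V) : Prop :=
  Dom adj r a b ∧ a ≠ b

/-- `v` is reachable from the root `r`. -/
def Reach (adj : V → V → Prop) (r v : V) : Prop :=
  ∃ p : List V, IsPath adj r v p

/-!
Fix a path from `r` to `v` and let `d` be the strict dominator of `v` visited last on it. Every
path to `d`, continued by the tail of the fixed path after `d`, is a path to `v`, and that tail
avoids all strict dominators of `v`; hence each of them lies on every path to `d`. Uniqueness
follows from antisymmetry of dominance: cut a path to `a` at its first visit to `a` or `b`.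
-/

namespace List

variable {α : Type*} {p : α → Prop} {l : List α}

theorem exists_eq_append_cons_first (h : ∃ x ∈ l, p x) :
    ∃ l₁ x l₂, l = l₁ ++ x :: l₂ ∧ p x ∧ ∀ y ∈ l₁, ¬p y := by
  classical
  obtain ⟨x, hx⟩ := Option.isSome_iff_exists.mp
    (find?_isSome (p := fun x => decide (p x)) (xs := l) |>.mpr (by simpa using h))
  obtain ⟨hpx, l₁, l₂, rfl, hl₁⟩ := find?_eq_some_iff_append.mp hx
  exact ⟨l₁, x, l₂, rfl, by simpa using hpx, fun y hy => by simpa using hl₁ y hy⟩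

theorem exists_eq_append_cons_last (h : ∃ x ∈ l, p x) :
    ∃ l₁ x l₂, l = l₁ ++ x :: l₂ ∧ p x ∧ ∀ y ∈ l₂, ¬p y := by
  obtain ⟨l₁, x, l₂, hl, hx, hl₁⟩ := exists_eq_append_cons_first (l := l.reverse) (by simpa using h)
  refine ⟨l₂.reverse, x, l₁.reverse, ?_, hx, fun y hy => hl₁ y (mem_reverse.mp hy)⟩
  rw [← reverse_reverse l, hl]
  simp

end List

section Dominance

variable {adj : V → V → Prop} {r a b v x : V}

theorem IsPath.prefix {l₁ l₂ : List V} (h : IsPath adj r v (l₁ ++ x :: l₂)) :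
    IsPath adj r x (l₁ ++ [x]) := by
  refine ⟨?_, by simp, h.2.2.prefix ⟨l₂, by simp⟩⟩
  cases l₁ <;> simpa using h.1

theorem IsPath.append {q l₁ l₂ : List V} (hq : IsPath adj r x q)
    (hp : IsPath adj r v (l₁ ++ x :: l₂)) : IsPath adj r v (q ++ l₂) := by
  obtain ⟨q, rfl⟩ := List.getLast?_eq_some_iff.mp hq.2.1
  refine ⟨?_, ?_, hq.2.2.append_overlap (hp.2.2.suffix ⟨l₁, by simp⟩) (by simp)⟩
  · rw [List.head?_append_of_ne_nil _ (by simp)]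
    exact hq.1
  · simpa [List.getLast?_append_cons] using hp.2.1

theorem IsPath.mem_last {p : List V} (h : IsPath adj r v p) : v ∈ p :=
  List.mem_of_getLast? h.2.1

theorem Dom.antisymm (hab : Dom adj r a b) (hba : Dom adj r b a) (ha : Reach adj r a) :
    a = b := by
  obtain ⟨p, hp⟩ := ha
  obtain ⟨l₁, x, l₂, rfl, hx, hl₁⟩ :=
    List.exists_eq_append_cons_first (p := fun y => y = a ∨ y = b) ⟨a, hp.mem_last, .inl rfl⟩
  rcases hx with rfl | rfl
  · have hb := hba _ hp.prefix
    simp only [List.mem_append, List.mem_singleton] at hb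
    exact (hb.resolve_left fun hb => hl₁ b hb (.inr rfl)).symm
  · have ha := hab _ hp.prefix
    simp only [List.mem_append, List.mem_singleton] at ha
    exact ha.resolve_left fun ha => hl₁ a ha (.inl rfl)

def IsImmediateDom (adj : V → V → Prop) (r d v : V) : Prop :=
  StrictDom adj r d v ∧ ∀ d', StrictDom adj r d' v → d' ≠ d → StrictDom adj r d' d

theorem exists_isImmediateDom (hv : Reach adj r v) (hex : ∃ d, StrictDom adj r d v) :
    ∃ d, IsImmediateDom adj r d v := by
  obtain ⟨p, hp⟩ := hv
  obtain ⟨d₀, hd₀⟩ := hex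
  obtain ⟨l₁, d, l₂, rfl, hd, hl₂⟩ :=
    List.exists_eq_append_cons_last (p := (StrictDom adj r · v)) ⟨d₀, hd₀.1 p hp, hd₀⟩
  refine ⟨d, hd, fun d' hd' hne => ⟨fun q hq => ?_, hne⟩⟩
  rcases List.mem_append.mp (hd'.1 _ (hq.append hp)) with h | h
  · exact h
  · exact absurd hd' (hl₂ d' h)

theorem IsImmediateDom.eq (h : IsImmediateDom adj r a v) (h' : IsImmediateDom adj r b v)
    (ha : Reach adj r a) : a = b := by
  by_contra hne
  exact hne <| Dom.antisymm (h'.2 a h.1 hne).1 (h.2 b h'.1 (Ne.symm hne)).1 ha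

end Dominance

theorem unique_immediate_dominator_general (adj : V → V → Prop) (r v : V)
    (hreach : ∀ u : V, Reach adj r u)
    (hex : ∃ d, StrictDom adj r d v) :
    ∃! d : V, StrictDom adj r d v ∧
      ∀ d', StrictDom adj r d' v → d' ≠ d → StrictDom adj r d' d := by
  obtain ⟨d, hd⟩ := exists_isImmediateDom (hreach v) hex
  exact ⟨d, hd, fun d' hd' => IsImmediateDom.eq hd' hd (hreach d')⟩

/-- In a finite rooted directed graph with all vertices reachable from the root, every
vertex other than the root that has a strict dominator has a unique immediate
dominator: a strict dominator `d` of `v` such that every other strict dominator of `v`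
strictly dominates `d`. -/
theorem unique_immediate_dominator [Fintype V] (adj : V → V → Prop) (r v : V)
    (hreach : ∀ u : V, Reach adj r u) (hv : v ≠ r)
    (hex : ∃ d, StrictDom adj r d v) :
    ∃! d : V, StrictDom adj r d v ∧
      ∀ d', StrictDom adj r d' v → d' ≠ d → StrictDom adj r d' d :=
  unique_immediate_dominator_general adj r v hreach hex
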